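/- Suppose n ≥ 20 is an integer and d > 0 satisfies 108·π² ≥ (8·π²·(2/3)^n·2^{n−1−(n−1)}·d^{3/2})/((8·π²)^n·256). Then d^{1/n} ≤ 24.117·229^{1/n}. -/

import Mathlib

/-!
Clearing denominators, the volume bound reads `d^{3/2} ≤ 3456 (12π²)^n`, since
`(8π²)^n = (2/3)^n (12π²)^n`. Numerically `3456^{2/3} ≤ 229` and `(12π²)^{2/3} ≤ 24.117`,
so `d ≤ 229 · 24.117^n`, and taking `n`-th roots gives the claim.
-/

open Real

lemma le_rpow_three_halves_of_sq_le_pow_three {x y : ℝ} (hy : 0 ≤ y) (h : x ^ 2 ≤ y ^ 3) :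
    x ≤ y ^ ((3 : ℝ) / 2) := by
  have hsqrt : y ^ ((3 : ℝ) / 2) = √(y ^ 3) := by
    rw [sqrt_eq_rpow, ← rpow_natCast, ← rpow_mul hy]
    norm_num
  rw [hsqrt]
  exact le_sqrt_of_sq_le h

lemma twelve_mul_pi_sq_le : 12 * π ^ 2 ≤ (24.117 : ℝ) ^ ((3 : ℝ) / 2) := by
  apply le_rpow_three_halves_of_sq_le_pow_three (by norm_num)
  have hπ : π < 3.141593 := pi_lt_d6
  have hπ2 : π ^ 2 < 9.869607 := by nlinarith [pi_pos]
  nlinarith [sq_nonneg π]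

lemma rpow_three_halves_le_of_volume_bound (n : ℕ) {d : ℝ}
    (h : 8 * π ^ 2 * (2 / 3 : ℝ) ^ n * (2 : ℝ) ^ (n - 1 - (n - 1)) * d ^ ((3 : ℝ) / 2) /
        ((8 * π ^ 2) ^ n * 256) ≤ 108 * π ^ 2) :
    d ^ ((3 : ℝ) / 2) ≤ 3456 * (12 * π ^ 2) ^ n := by
  have hpos : 0 < 8 * π ^ 2 * (2 / 3 : ℝ) ^ n := by positivity
  rw [Nat.sub_self, pow_zero, mul_one, div_le_iff₀ (by positivity)] at h
  refine le_of_mul_le_mul_left (h.trans_eq ?_) hpos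
  rw [show (8 * π ^ 2 : ℝ) ^ n = (2 / 3 * (12 * π ^ 2)) ^ n by ring, mul_pow]
  ring

lemma rpow_one_div_le_mul_rpow_of_le_mul_pow {d C a : ℝ} {n : ℕ} (hd : 0 ≤ d) (hC : 0 ≤ C)
    (ha : 0 ≤ a) (hn : n ≠ 0) (h : d ≤ C * a ^ n) :
    d ^ ((1 : ℝ) / n) ≤ a * C ^ ((1 : ℝ) / n) :=
  calc d ^ ((1 : ℝ) / n) ≤ (C * a ^ n) ^ ((1 : ℝ) / n) := by gcongr
    _ = a * C ^ ((1 : ℝ) / n) := by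
      rw [mul_rpow hC (by positivity), one_div, pow_rpow_inv_natCast ha hn, mul_comm]

theorem stmt_3_general (n : ℕ) (d : ℝ) (hd : 0 < d)
    (hineq : 8 * π ^ 2 * (2 / 3 : ℝ) ^ n * (2 : ℝ) ^ (n - 1 - (n - 1)) * d ^ ((3 : ℝ) / 2) /
        ((8 * π ^ 2) ^ n * 256) ≤ 108 * π ^ 2) :
    d ^ ((1 : ℝ) / n) ≤ 24.117 * (229 : ℝ) ^ ((1 : ℝ) / n) := by
  have hd_le : d ≤ 229 * 24.117 ^ n := by
    rw [← rpow_le_rpow_iff hd.le (by positivity) (by norm_num : (0 : ℝ) < 3 / 2)]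
    calc d ^ ((3 : ℝ) / 2) ≤ 3456 * (12 * π ^ 2) ^ n :=
          rpow_three_halves_le_of_volume_bound n hineq
      _ ≤ (229 : ℝ) ^ ((3 : ℝ) / 2) * ((24.117 : ℝ) ^ ((3 : ℝ) / 2)) ^ n := by
          gcongr
          · exact le_rpow_three_halves_of_sq_le_pow_three (by norm_num) (by norm_num)
          · exact twelve_mul_pi_sq_le
      _ = (229 * 24.117 ^ n) ^ ((3 : ℝ) / 2) := by
          rw [rpow_pow_comm (by norm_num), mul_rpow (by norm_num) (by positivity)]
  rcases eq_or_ne n 0 with rfl | hn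
  · norm_num
  · exact rpow_one_div_le_mul_rpow_of_le_mul_pow hd.le (by norm_num) (by norm_num) hn hd_le

open Real in
/-- If `n ≥ 20` and `d > 0` satisfy
`108·π² ≥ 8·π²·(2/3)^n·2^{n−1−(n−1)}·d^{3/2}/((8·π²)^n·256)`, then
`d^{1/n} ≤ 24.117·229^{1/n}`. -/
theorem stmt_3 (n : ℕ) (hn : 20 ≤ n) (d : ℝ) (hd : 0 < d)
    (hineq : 8 * π ^ 2 * (2 / 3 : ℝ) ^ n * (2 : ℝ) ^ (n - 1 - (n - 1)) * d ^ ((3 : ℝ) / 2) /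
        ((8 * π ^ 2) ^ n * 256) ≤ 108 * π ^ 2) :
    d ^ ((1 : ℝ) / n) ≤ 24.117 * (229 : ℝ) ^ ((1 : ℝ) / n) :=
  stmt_3_general n d hd hineq
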